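/- Let V1 and V2 be Lagrangian subspaces of ℂⁿ with V1 ∩ V2 = {0}. Then there exist a unitary matrix A ∈ U(n) and angles θ1, …, θn ∈ (0, π) such that V1 = A·ℝⁿ and V2 = A·{ (e^{iθ1}x1, …, e^{iθn}xn) : x ∈ ℝⁿ }. -/

import Mathlib

open scoped ComplexConjugate

/-- The standard symplectic form on `ℂⁿ`: `ω(u,v) = Re⟨iu, v⟩` for the real inner
product given by the real part of the Hermitian inner product. -/
def omegaForm (n : ℕ) (u v : Fin n → ℂ) : ℝ :=
  ∑ i, ((Complex.I * u i) * conj (v i)).re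

/-- A Lagrangian subspace of `ℂⁿ`: a real subspace of dimension `n` on which the
standard symplectic form vanishes. -/
def IsLagrangian (n : ℕ) (V : Submodule ℝ (Fin n → ℂ)) : Prop :=
  Module.finrank ℝ V = n ∧ ∀ u ∈ V, ∀ v ∈ V, omegaForm n u v = 0

/-- The real-linear map `x ↦ Lx + ix` from `ℝⁿ` to `ℂⁿ`. -/
noncomputable def vlMap (n : ℕ) (L : Matrix (Fin n) (Fin n) ℝ) : (Fin n → ℝ) →ₗ[ℝ] (Fin n → ℂ) where
  toFun x := fun i => ((L.mulVec x i : ℝ) : ℂ) + Complex.I * ((x i : ℝ) : ℂ)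
  map_add' x y := by
    funext i
    simp [Matrix.mulVec_add]
    ring
  map_smul' c x := by
    funext i
    simp [Matrix.mulVec_smul, Complex.real_smul]
    ring

/-- The subspace `V(L) = { Lx + ix : x ∈ ℝⁿ } ⊆ ℂⁿ`. -/
noncomputable def VL (n : ℕ) (L : Matrix (Fin n) (Fin n) ℝ) : Submodule ℝ (Fin n → ℂ) :=
  LinearMap.range (vlMap n L)

/-- The real-linear inclusion `ℝⁿ → ℂⁿ`. -/
noncomputable def realInc (n : ℕ) : (Fin n → ℝ) →ₗ[ℝ] (Fin n → ℂ) where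
  toFun x := fun i => ((x i : ℝ) : ℂ)
  map_add' x y := by funext i; push_cast; simp
  map_smul' c x := by funext i; simp [Complex.real_smul]

/-- `ℝⁿ` as a real subspace of `ℂⁿ`. -/
noncomputable def realSubspace (n : ℕ) : Submodule ℝ (Fin n → ℂ) := LinearMap.range (realInc n)

open Matrix Complex

lemma omega_eq_im (n : ℕ) (u v : Fin n → ℂ) :
    omegaForm n u v = (star u ⬝ᵥ v).im := by
  rw [omegaForm, dotProduct, Complex.im_sum]
  refine Finset.sum_congr rfl fun i _ => ?_
  simp [Complex.mul_re, Complex.mul_im]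
  ring

lemma map_real_mulVec (n : ℕ) (Q : Matrix (Fin n) (Fin n) ℝ) (x : Fin n → ℝ) :
    (Q.map (Complex.ofReal)).mulVec (fun i => ((x i : ℝ) : ℂ))
      = fun i => ((Q.mulVec x i : ℝ) : ℂ) := by
  funext i
  simp [Matrix.mulVec, dotProduct, Matrix.map_apply]

lemma map_mem_unitary (n : ℕ) (Q : Matrix (Fin n) (Fin n) ℝ)
    (hQ : Q ∈ Matrix.unitaryGroup (Fin n) ℝ) :
    Q.map (Complex.ofReal) ∈ Matrix.unitaryGroup (Fin n) ℂ := by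
  rw [Matrix.mem_unitaryGroup_iff]
  have h1 : Q * star Q = 1 := Matrix.mem_unitaryGroup_iff.mp hQ
  have key : Q.map (Complex.ofReal) * star (Q.map (Complex.ofReal))
      = (Q * star Q).map (Complex.ofReal) := by
    ext i j
    simp [Matrix.mul_apply, Matrix.map_apply, Matrix.conjTranspose_apply]
  rw [key, h1]
  ext i j
  simp [Matrix.one_apply, Matrix.map_apply, apply_ite]

lemma omega_mulVec_unitary (n : ℕ) (A : Matrix (Fin n) (Fin n) ℂ)
    (hA : A ∈ Matrix.unitaryGroup (Fin n) ℂ) (u v : Fin n → ℂ) :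
    omegaForm n (A.mulVec u) (A.mulVec v) = omegaForm n u v := by
  have h : Aᴴ * A = 1 := by
    have := Matrix.mem_unitaryGroup_iff'.mp hA
    rwa [Matrix.star_eq_conjTranspose] at this
  rw [omega_eq_im, omega_eq_im]
  congr 1
  rw [Matrix.star_mulVec, ← Matrix.dotProduct_mulVec, Matrix.mulVec_mulVec, h,
    Matrix.one_mulVec]

lemma lagrangian_exists_unitary (n : ℕ) (V : Submodule ℝ (Fin n → ℂ))
    (hV : IsLagrangian n V) :
    ∃ A ∈ Matrix.unitaryGroup (Fin n) ℂ,
      (V : Set (Fin n → ℂ))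
        = Set.range (fun x : Fin n → ℝ => A.mulVec fun i => ((x i : ℝ) : ℂ)) := by
  let E := EuclideanSpace ℂ (Fin n)
  let eqv : E ≃ₗ[ℝ] (Fin n → ℂ) := (WithLp.linearEquiv 2 ℂ (Fin n → ℂ)).restrictScalars ℝ
  let V' : Submodule ℝ E := V.comap eqv.toLinearMap
  have hr : Module.finrank ℝ V' = n := by
    rw [show V' = _ from Submodule.comap_equiv_eq_map_symm eqv V, LinearEquiv.finrank_map_eq]; exact hV.1
  let b : OrthonormalBasis (Fin n) ℝ V' :=
    (stdOrthonormalBasis ℝ V').reindex (finCongr hr)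
  let c : Fin n → (Fin n → ℂ) := fun j => ((b j : E) : Fin n → ℂ)
  have hcV : ∀ j, c j ∈ V := fun j => (b j).2
  have hherm : ∀ j k, (star (c j) ⬝ᵥ c k) = if j = k then (1:ℂ) else 0 := by
    intro j k
    have hio : (inner (𝕜 := ℂ) (b j : E) (b k : E)) = star (c j) ⬝ᵥ c k := by
      rw [PiLp.inner_apply]; simp [dotProduct, c, mul_comm]
    have hre : (inner (𝕜 := ℝ) (b j) (b k) : ℝ)
        = (inner (𝕜 := ℂ) (b j : E) (b k : E)).re := by
      rw [Submodule.coe_inner, PiLp.inner_apply, PiLp.inner_apply, Complex.re_sum]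
      rfl
    have him : (inner (𝕜 := ℂ) (b j : E) (b k : E)).im = 0 := by
      have h0 := hV.2 (c j) (hcV j) (c k) (hcV k)
      rw [omega_eq_im] at h0
      rw [hio]; exact h0
    have hortho := b.orthonormal
    rw [orthonormal_iff_ite] at hortho
    have hd := hortho j k
    rw [← hio]
    apply Complex.ext
    · rw [← hre, hd]
      by_cases h : j = k <;> simp [h]
    · rw [him]
      by_cases h : j = k <;> simp [h]
  refine ⟨Matrix.of (fun i j => c j i), ?_, ?_⟩
  · rw [Matrix.mem_unitaryGroup_iff, mul_eq_one_comm]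
    ext j k
    rw [Matrix.mul_apply, Matrix.one_apply]
    rw [← hherm j k]
    simp [dotProduct, Matrix.star_apply, Matrix.conjTranspose_apply]
  · ext v
    have key : ∀ x : Fin n → ℝ,
        (Matrix.of (fun i j => c j i)).mulVec (fun i => ((x i : ℝ) : ℂ))
          = ∑ j, x j • c j := by
      intro x
      funext i
      rw [Finset.sum_apply]
      simp [Matrix.mulVec, dotProduct, Complex.real_smul, mul_comm]
    constructor
    · intro hv
      refine ⟨fun j => b.repr ⟨WithLp.toLp 2 v, hv⟩ j, ?_⟩
      simp only [key]
      have := b.sum_repr ⟨WithLp.toLp 2 v, hv⟩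
      calc ∑ j, b.repr ⟨WithLp.toLp 2 v, hv⟩ j • c j
          = ((∑ j, b.repr ⟨WithLp.toLp 2 v, hv⟩ j • b j : V') : E) := by
            push_cast; exact (map_sum eqv (fun j => b.repr ⟨WithLp.toLp 2 v, hv⟩ j • (b j : E)) Finset.univ).symm
        _ = v := by rw [this]
    · rintro ⟨x, rfl⟩
      simp only [key]
      exact Submodule.sum_mem V fun j _ => Submodule.smul_mem V _ (hcV j)

noncomputable def imMap (n : ℕ) : (Fin n → ℂ) →ₗ[ℝ] (Fin n → ℝ) where
  toFun v := fun i => (v i).im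
  map_add' x y := by funext i; simp
  map_smul' c x := by funext i; simp [Complex.real_smul]

noncomputable def reMap (n : ℕ) : (Fin n → ℂ) →ₗ[ℝ] (Fin n → ℝ) where
  toFun v := fun i => (v i).re
  map_add' x y := by funext i; simp
  map_smul' c x := by funext i; simp [Complex.real_smul]

lemma graph_of_transverse (n : ℕ) (W : Submodule ℝ (Fin n → ℂ))
    (hW : IsLagrangian n W) (htrans : W ⊓ realSubspace n = ⊥) :
    ∃ L : Matrix (Fin n) (Fin n) ℝ, L.IsSymm ∧
      (W : Set (Fin n → ℂ)) = Set.range (vlMap n L) := by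
  classical
  let g : W →ₗ[ℝ] (Fin n → ℝ) := (imMap n).comp W.subtype
  have hginj : Function.Injective g := by
    rw [← LinearMap.ker_eq_bot]
    rw [Submodule.eq_bot_iff]
    rintro w hw
    have him : ∀ i, ((w : Fin n → ℂ) i).im = 0 := by
      intro i
      have : g w = 0 := hw
      exact congrFun this i
    have hreal : (w : Fin n → ℂ) ∈ realSubspace n := by
      refine ⟨fun i => ((w : Fin n → ℂ) i).re, ?_⟩
      funext i
      apply Complex.ext
      · rfl
      · simp [realInc, him i]
    have : (w : Fin n → ℂ) ∈ W ⊓ realSubspace n := ⟨w.2, hreal⟩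
    rw [htrans] at this
    exact Subtype.ext this
  haveI : FiniteDimensional ℝ W := by infer_instance
  have hgsurj : Function.Surjective g := by
    have hfr : Module.finrank ℝ W = Module.finrank ℝ (Fin n → ℝ) := by
      rw [hW.1, Module.finrank_fin_fun]
    exact (LinearMap.injective_iff_surjective_of_finrank_eq_finrank hfr).mp hginj
  let e : W ≃ₗ[ℝ] (Fin n → ℝ) := LinearEquiv.ofBijective g ⟨hginj, hgsurj⟩
  let T : (Fin n → ℝ) →ₗ[ℝ] (Fin n → ℂ) := W.subtype.comp e.symm.toLinearMap
  have hTmem : ∀ x, T x ∈ W := fun x => (e.symm x).2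
  have hTim : ∀ x i, (T x i).im = x i := by
    intro x i
    have : g (e.symm x) = x := e.apply_symm_apply x
    exact congrFun this i
  let Lmap : (Fin n → ℝ) →ₗ[ℝ] (Fin n → ℝ) := (reMap n).comp T
  let L : Matrix (Fin n) (Fin n) ℝ := LinearMap.toMatrix' Lmap
  have hLmul : ∀ x, L.mulVec x = Lmap x := by
    intro x
    rw [← Matrix.toLin'_apply, Matrix.toLin'_toMatrix']
  have hTvl : ∀ x, T x = vlMap n L x := by
    intro x
    funext i
    apply Complex.ext
    · simp [vlMap, hLmul, Lmap, reMap, hTim]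
    · simp [vlMap, hTim]
  have hset : (W : Set (Fin n → ℂ)) = Set.range (vlMap n L) := by
    ext v
    constructor
    · intro hv
      refine ⟨g ⟨v, hv⟩, ?_⟩
      rw [← hTvl]
      show (W.subtype (e.symm (e ⟨v, hv⟩)) : Fin n → ℂ) = v
      rw [e.symm_apply_apply]
      rfl
    · rintro ⟨x, rfl⟩
      rw [← hTvl]
      exact hTmem x
  refine ⟨L, ?_, hset⟩
  have hkey : ∀ x y : Fin n → ℝ, L.mulVec x ⬝ᵥ y = x ⬝ᵥ L.mulVec y := by
    intro x y
    have h0 := hW.2 (vlMap n L x) (by rw [← hTvl]; exact hTmem x)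
      (vlMap n L y) (by rw [← hTvl]; exact hTmem y)
    rw [omega_eq_im] at h0
    have hcomp : (star (vlMap n L x) ⬝ᵥ vlMap n L y).im
        = L.mulVec x ⬝ᵥ y - x ⬝ᵥ L.mulVec y := by
      rw [dotProduct, Complex.im_sum, dotProduct, dotProduct,
        ← Finset.sum_sub_distrib]
      refine Finset.sum_congr rfl fun i _ => ?_
      simp [vlMap, Complex.mul_im]
      ring
    rw [hcomp] at h0
    linarith
  rw [Matrix.IsSymm]
  ext i j
  have := hkey (Pi.single i 1) (Pi.single j 1)
  simpa [dotProduct_single, single_dotProduct, Matrix.mulVec_single] using this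

lemma exp_angle (l : ℝ) :
    Complex.exp (((Real.pi / 2 - Real.arctan l : ℝ) : ℂ) * Complex.I)
      * ((Real.sqrt (1 + l ^ 2) : ℝ) : ℂ) = (l : ℂ) + Complex.I := by
  rw [Complex.exp_mul_I, ← Complex.ofReal_cos, ← Complex.ofReal_sin,
    Real.cos_pi_div_two_sub, Real.sin_pi_div_two_sub, Real.sin_arctan, Real.cos_arctan]
  have hpos : (0:ℝ) < Real.sqrt (1 + l ^ 2) := Real.sqrt_pos.mpr (by positivity)
  have hne : ((Real.sqrt (1 + l ^ 2) : ℝ) : ℂ) ≠ 0 := Complex.ofReal_ne_zero.mpr hpos.ne'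
  push_cast
  field_simp

lemma vl_canonical (n : ℕ) (L : Matrix (Fin n) (Fin n) ℝ) (hL : L.IsSymm) :
    ∃ Q ∈ Matrix.unitaryGroup (Fin n) ℝ, ∃ θ : Fin n → ℝ,
      (∀ i, θ i ∈ Set.Ioo 0 Real.pi) ∧
      Set.range (vlMap n L) = Set.range (fun x : Fin n → ℝ =>
        (Q.map Complex.ofReal).mulVec fun i =>
          Complex.exp ((θ i : ℂ) * Complex.I) * ((x i : ℝ) : ℂ)) := by
  classical
  have hH : L.IsHermitian := by
    rw [Matrix.IsHermitian, Matrix.conjTranspose_eq_transpose_of_trivial]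
    exact hL
  set Q : Matrix (Fin n) (Fin n) ℝ := (hH.eigenvectorUnitary : Matrix (Fin n) (Fin n) ℝ) with hQdef
  have hQ : Q ∈ Matrix.unitaryGroup (Fin n) ℝ := hH.eigenvectorUnitary.2
  set lam : Fin n → ℝ := hH.eigenvalues with hlamdef
  have hspec : L = Q * Matrix.diagonal lam * star Q := by
    have := hH.spectral_theorem
    rwa [RCLike.ofReal_real_eq_id, Function.id_comp] at this
  have hQs : Q * star Q = 1 := Matrix.mem_unitaryGroup_iff.mp hQ
  have hsQ : star Q * Q = 1 := Matrix.mem_unitaryGroup_iff'.mp hQ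
  have hspos : ∀ i, 0 < Real.sqrt (1 + lam i ^ 2) :=
    fun i => Real.sqrt_pos.mpr (by positivity)
  have hθIoo : ∀ i, (Real.pi / 2 - Real.arctan (lam i)) ∈ Set.Ioo 0 Real.pi := by
    intro i
    obtain ⟨ha1, ha2⟩ := Real.arctan_mem_Ioo (lam i)
    exact ⟨by linarith [Real.pi_pos], by linarith [Real.pi_pos]⟩
  have hvl : ∀ y : Fin n → ℝ, vlMap n L (Q.mulVec y)
      = (Q.map Complex.ofReal).mulVec
          (fun i => ((lam i : ℂ) + Complex.I) * ((y i : ℝ) : ℂ)) := by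
    intro y
    have hdiag : (Matrix.diagonal lam).mulVec y = fun i => lam i * y i := by
      funext i
      rw [Matrix.mulVec_diagonal]
    have hLQ : L.mulVec (Q.mulVec y) = Q.mulVec (fun i => lam i * y i) := by
      rw [Matrix.mulVec_mulVec, hspec]
      have h2 : Q * Matrix.diagonal lam * star Q * Q = Q * Matrix.diagonal lam := by
        rw [mul_assoc, hsQ, mul_one]
      rw [h2, ← Matrix.mulVec_mulVec, hdiag]
    funext i
    show ((L.mulVec (Q.mulVec y) i : ℝ) : ℂ) + Complex.I * ((Q.mulVec y i : ℝ) : ℂ) = _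
    rw [hLQ]
    simp only [Matrix.mulVec, dotProduct, Matrix.map_apply]
    push_cast
    rw [Finset.mul_sum, ← Finset.sum_add_distrib]
    exact Finset.sum_congr rfl fun j _ => by ring
  refine ⟨Q, hQ, fun i => Real.pi / 2 - Real.arctan (lam i), hθIoo, ?_⟩
  have hfwd : ∀ x : Fin n → ℝ,
      (Q.map Complex.ofReal).mulVec (fun i =>
          Complex.exp (((Real.pi / 2 - Real.arctan (lam i) : ℝ) : ℂ) * Complex.I)
            * ((Real.sqrt (1 + lam i ^ 2) * ((star Q).mulVec x) i : ℝ) : ℂ))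
        = vlMap n L x := by
    intro x
    have hx : x = Q.mulVec ((star Q).mulVec x) := by
      rw [Matrix.mulVec_mulVec, hQs, Matrix.one_mulVec]
    conv_rhs => rw [hx, hvl]
    have harg : (fun i =>
        Complex.exp (((Real.pi / 2 - Real.arctan (lam i) : ℝ) : ℂ) * Complex.I)
          * ((Real.sqrt (1 + lam i ^ 2) * ((star Q).mulVec x) i : ℝ) : ℂ))
        = fun i => ((lam i : ℂ) + Complex.I) * ((((star Q).mulVec x) i : ℝ) : ℂ) := by
      funext i
      rw [Complex.ofReal_mul, ← mul_assoc, exp_angle]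
    rw [harg]
  have hbwd : ∀ z : Fin n → ℝ,
      (Q.map Complex.ofReal).mulVec (fun i =>
          Complex.exp (((Real.pi / 2 - Real.arctan (lam i) : ℝ) : ℂ) * Complex.I)
            * ((z i : ℝ) : ℂ))
        = vlMap n L (Q.mulVec (fun i => z i / Real.sqrt (1 + lam i ^ 2))) := by
    intro z
    rw [hvl]
    have harg : (fun i =>
        Complex.exp (((Real.pi / 2 - Real.arctan (lam i) : ℝ) : ℂ) * Complex.I)
          * ((z i : ℝ) : ℂ))
        = fun i => ((lam i : ℂ) + Complex.I)
            * (((z i / Real.sqrt (1 + lam i ^ 2) : ℝ)) : ℂ) := by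
      funext i
      have hcancel : Real.sqrt (1 + lam i ^ 2) * (z i / Real.sqrt (1 + lam i ^ 2)) = z i := by
        field_simp
      rw [← exp_angle (lam i), mul_assoc, ← Complex.ofReal_mul, hcancel]
    rw [harg]
  ext v
  constructor
  · rintro ⟨x, rfl⟩
    exact ⟨_, hfwd x⟩
  · rintro ⟨z, rfl⟩
    exact ⟨_, (hbwd z).symm⟩

/-- Canonical coordinates for a transverse pair of Lagrangian subspaces: there are a
unitary `A` and angles `θ i ∈ (0, π)` with `V1 = A·ℝⁿ` and
`V2 = A·{(exp(iθ₁)x₁, …, exp(iθₙ)xₙ) : x ∈ ℝⁿ}`. -/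
theorem stmt4 (n : ℕ) (V1 V2 : Submodule ℝ (Fin n → ℂ))
    (h1 : IsLagrangian n V1) (h2 : IsLagrangian n V2) (h12 : V1 ⊓ V2 = ⊥) :
    ∃ (A : Matrix (Fin n) (Fin n) ℂ) (θ : Fin n → ℝ),
      A ∈ Matrix.unitaryGroup (Fin n) ℂ ∧
      (∀ i, θ i ∈ Set.Ioo 0 Real.pi) ∧
      (V1 : Set (Fin n → ℂ))
        = Set.range (fun x : Fin n → ℝ => A.mulVec fun i => ((x i : ℝ) : ℂ)) ∧
      (V2 : Set (Fin n → ℂ))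
        = Set.range (fun x : Fin n → ℝ =>
            A.mulVec fun i => Complex.exp ((θ i : ℂ) * Complex.I) * ((x i : ℝ) : ℂ)) := by
  classical
  obtain ⟨A₁, hA₁u, hA₁set⟩ := lagrangian_exists_unitary n V1 h1
  have hA₁s : A₁ * star A₁ = 1 := Matrix.mem_unitaryGroup_iff.mp hA₁u
  have hsA₁ : star A₁ * A₁ = 1 := Matrix.mem_unitaryGroup_iff'.mp hA₁u
  let f : (Fin n → ℂ) →ₗ[ℝ] (Fin n → ℂ) := (A₁.mulVecLin).restrictScalars ℝ
  let finv : (Fin n → ℂ) →ₗ[ℝ] (Fin n → ℂ) := ((star A₁).mulVecLin).restrictScalars ℝ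
  have hff : ∀ v, f (finv v) = v := by
    intro v
    show A₁.mulVec ((star A₁).mulVec v) = v
    rw [Matrix.mulVec_mulVec, hA₁s, Matrix.one_mulVec]
  have hff' : ∀ v, finv (f v) = v := by
    intro v
    show (star A₁).mulVec (A₁.mulVec v) = v
    rw [Matrix.mulVec_mulVec, hsA₁, Matrix.one_mulVec]
  let fe : (Fin n → ℂ) ≃ₗ[ℝ] (Fin n → ℂ) :=
    LinearEquiv.ofLinear f finv (LinearMap.ext hff) (LinearMap.ext hff')
  have hfe : ∀ v, fe v = A₁.mulVec v := fun v => rfl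
  let W : Submodule ℝ (Fin n → ℂ) := Submodule.comap (fe : (Fin n → ℂ) →ₗ[ℝ] (Fin n → ℂ)) V2
  have hWrank : Module.finrank ℝ W = n := by
    have hm : W = Submodule.map (fe.symm : (Fin n → ℂ) →ₗ[ℝ] (Fin n → ℂ)) V2 :=
      Submodule.comap_equiv_eq_map_symm fe V2
    rw [hm, LinearEquiv.finrank_map_eq fe.symm V2, h2.1]
  have hWlag : IsLagrangian n W := by
    refine ⟨hWrank, ?_⟩
    intro u hu v hv
    have h0 := h2.2 _ (Submodule.mem_comap.mp hu) _ (Submodule.mem_comap.mp hv)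
    rw [← omega_mulVec_unitary n A₁ hA₁u u v]
    exact h0
  have htransW : W ⊓ realSubspace n = ⊥ := by
    rw [Submodule.eq_bot_iff]
    rintro w ⟨hwW, hwR⟩
    obtain ⟨x, rfl⟩ := hwR
    have h1mem : fe (realInc n x) ∈ V1 := by
      have hmem : A₁.mulVec (fun i => ((x i : ℝ) : ℂ)) ∈ (V1 : Set (Fin n → ℂ)) := by
        rw [hA₁set]; exact ⟨x, rfl⟩
      exact hmem
    have h2mem : fe (realInc n x) ∈ V2 := Submodule.mem_comap.mp hwW
    have hbot : fe (realInc n x) ∈ V1 ⊓ V2 := ⟨h1mem, h2mem⟩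
    rw [h12] at hbot
    have hz : fe (realInc n x) = 0 := hbot
    have := congrArg fe.symm hz
    simpa using this
  obtain ⟨L, hLsymm, hWset⟩ := graph_of_transverse n W hWlag htransW
  obtain ⟨Q, hQu, θ, hθIoo, hLrange⟩ := vl_canonical n L hLsymm
  have hQs : Q * star Q = 1 := Matrix.mem_unitaryGroup_iff.mp hQu
  have hsQ : star Q * Q = 1 := Matrix.mem_unitaryGroup_iff'.mp hQu
  refine ⟨A₁ * Q.map Complex.ofReal, θ,
    mul_mem hA₁u (map_mem_unitary n Q hQu), hθIoo, ?_, ?_⟩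
  · rw [hA₁set]
    ext v
    constructor
    · rintro ⟨x, rfl⟩
      refine ⟨(star Q).mulVec x, ?_⟩
      show (A₁ * Q.map Complex.ofReal).mulVec
          (fun i => ((((star Q).mulVec x) i : ℝ) : ℂ))
        = A₁.mulVec fun i => ((x i : ℝ) : ℂ)
      rw [← Matrix.mulVec_mulVec, map_real_mulVec]
      have hc : Q.mulVec ((star Q).mulVec x) = x := by
        rw [Matrix.mulVec_mulVec, hQs, Matrix.one_mulVec]
      rw [hc]
    · rintro ⟨x, rfl⟩
      refine ⟨Q.mulVec x, ?_⟩
      show A₁.mulVec (fun i => (((Q.mulVec x) i : ℝ) : ℂ))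
        = (A₁ * Q.map Complex.ofReal).mulVec fun i => ((x i : ℝ) : ℂ)
      rw [← Matrix.mulVec_mulVec, map_real_mulVec]
  · have himg : (V2 : Set (Fin n → ℂ)) = (fe : (Fin n → ℂ) → (Fin n → ℂ)) '' (W : Set (Fin n → ℂ)) := by
      have hmap : Submodule.map (fe : (Fin n → ℂ) →ₗ[ℝ] (Fin n → ℂ)) W = V2 :=
        Submodule.map_comap_eq_of_surjective fe.surjective V2
      rw [← hmap]
      rfl
    rw [himg, hWset, hLrange, ← Set.range_comp]
    apply congrArg Set.range
    funext x
    show A₁.mulVec ((Q.map Complex.ofReal).mulVec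
        (fun i => Complex.exp ((θ i : ℂ) * Complex.I) * ((x i : ℝ) : ℂ))) = _
    rw [Matrix.mulVec_mulVec]
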